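/- arXiv:math/0506023 — 3 statements merged into one kernel-verified Lean document; each statement's English description precedes it below -/
import Mathlib

section
/- Let A and A' be commutative rings with identity whose additive groups are free abelian of rank 2 with bases {1, x} and {1', x'} respectively (where 1, 1' are the identities), with multiplication determined by x·x = a·1 + b·x and x'·x' = a'·1' + b'·x' for integers a, b, a', b'. Then A ≅ A' as rings if and only if b² + 4a = b'² + 4a' and b ≡ b' (mod 2). -/
/-!
A ring with `ℤ`-basis `{1, x}` and `x * x = a + b x` is isomorphic to `QuadraticAlgebra ℤ a b`,
via `ω ↦ x`. A ring isomorphism `QuadraticAlgebra ℤ a b ≃+* QuadraticAlgebra ℤ a' b'` sends `ω` to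
`m + n ω'` with `n` a unit, because `ω'` must lie in its image. Squaring gives `b = n b' + 2 m` and
`b² + 4 a = n² (b'² + 4 a')`, so with `n = ±1` both the discriminant and the parity of `b` agree.
Conversely, if they agree then `m = (b - b') / 2` is an integer and `ω ↦ ω' + m` is an isomorphism.
-/

namespace QuadraticAlgebra

variable {R : Type*} [CommRing R]

@[simp]
theorem basis_zero (a b : R) : basis a b 0 = 1 := by
  ext <;> simp [basis]

@[simp]
theorem basis_one (a b : R) : basis a b 1 = ω := by
  ext <;> simp [basis]

noncomputable def algEquivOfBasis {A : Type*} [CommRing A] [Algebra R A] {a b : R}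
    (B : Module.Basis (Fin 2) R A) (h0 : B 0 = 1) (h1 : B 1 * B 1 = a • 1 + b • B 1) :
    QuadraticAlgebra R a b ≃ₐ[R] A :=
  AlgEquiv.ofBijective (lift ⟨B 1, h1⟩) <| by
    have : (lift ⟨B 1, h1⟩).toLinearMap = ((basis a b).equiv B (Equiv.refl _)).toLinearMap :=
      (basis a b).ext fun i => by
        fin_cases i
        · simpa [h0] using ((basis a b).equiv_apply 0 B (Equiv.refl _)).symm
        · simpa using ((basis a b).equiv_apply 1 B (Equiv.refl _)).symm
    exact congrArg DFunLike.coe this ▸ ((basis a b).equiv B (Equiv.refl _)).bijective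

noncomputable def algEquivOfTranslate {a b a' b' : R} (m : R) (ha : a = a' - m * b' - m * m)
    (hb : b = b' + 2 * m) : QuadraticAlgebra R a b ≃ₐ[R] QuadraticAlgebra R a' b' :=
  AlgEquiv.ofAlgHom (lift ⟨⟨m, 1⟩, by ext <;> simp [ha, hb] <;> ring⟩)
    (lift ⟨⟨-m, 1⟩, by ext <;> simp [ha, hb] <;> ring⟩)
    (algHom_ext <| by ext <;> simp) (algHom_ext <| by ext <;> simp)

theorem isUnit_im_of_surjective {a b a' b' : R}
    (f : QuadraticAlgebra R a b →ₐ[R] QuadraticAlgebra R a' b') (hf : Function.Surjective f) :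
    IsUnit (f ω).im := by
  obtain ⟨z, hz⟩ := hf ω
  have : f z = algebraMap R _ z.re + z.im • f ω := by
    rw [← map_smul, ← AlgHom.commutes f, ← map_add, ← mk_eq_add_smul_omega]
  exact .of_mul_eq_one_right z.im (by simpa [hz] using congrArg im this.symm)

theorem discr_eq_of_mul_self_eq {a b a' b' : R} (z : QuadraticAlgebra R a' b')
    (hz : z * z = a • 1 + b • z) (hu : IsUnit z.im) :
    b = b' * z.im + 2 * z.re ∧ b ^ 2 + 4 * a = z.im ^ 2 * (b' ^ 2 + 4 * a') := by
  have hre := congrArg re hz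
  have him := congrArg im hz
  simp only [re_mul, re_add, re_smul, re_one, smul_eq_mul, mul_one, im_mul, im_add, im_smul,
    im_one, mul_zero, zero_add] at hre him
  have hb : b = b' * z.im + 2 * z.re := by
    have h : z.im * (b' * z.im + 2 * z.re - b) = 0 := by linear_combination him
    exact (sub_eq_zero.mp (hu.mul_right_eq_zero.mp h)).symm
  exact ⟨hb, by subst hb; linear_combination -4 * hre⟩

theorem nonempty_ringEquiv_iff {a b a' b' : ℤ} :
    Nonempty (QuadraticAlgebra ℤ a b ≃+* QuadraticAlgebra ℤ a' b') ↔
      b ^ 2 + 4 * a = b' ^ 2 + 4 * a' ∧ b % 2 = b' % 2 := by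
  constructor
  · rintro ⟨f⟩
    let g : QuadraticAlgebra ℤ a b →ₐ[ℤ] QuadraticAlgebra ℤ a' b' := f.toIntAlgEquiv
    have hz : g ω * g ω = a • 1 + b • g ω := by
      rw [← map_mul, omega_mul_omega_eq_add, map_add, map_zsmul, map_zsmul, map_one]
    have hu := isUnit_im_of_surjective g f.surjective
    obtain ⟨hb, hd⟩ := discr_eq_of_mul_self_eq (g ω) hz hu
    rcases Int.isUnit_iff.mp hu with h | h <;> rw [h] at hb hd <;>
      exact ⟨by linarith, by omega⟩
  · rintro ⟨hd, hp⟩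
    obtain ⟨m, hb⟩ : ∃ m, b = b' + 2 * m := ⟨(b - b') / 2, by omega⟩
    have ha : a = a' - m * b' - m * m :=
      mul_left_cancel₀ (four_ne_zero (α := ℤ)) (by subst hb; linear_combination hd)
    exact ⟨(algEquivOfTranslate m ha hb).toRingEquiv⟩

end QuadraticAlgebra

/-- Classification of ring structures on `ℤ ⊕ ℤ`: two commutative rings with identity,
free abelian of rank 2 with bases `{1, x}` and `{1', x'}`, with `x*x = a•1 + b•x` and
`x'*x' = a'•1' + b'•x'`, are isomorphic iff `b² + 4a = b'² + 4a'` and `b ≡ b' (mod 2)`. -/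
theorem rank_two_ring_classification (A A' : Type) [CommRing A] [CommRing A']
    (x : A) (x' : A') (a b a' b' : ℤ)
    (B : Module.Basis (Fin 2) ℤ A) (hB0 : B 0 = 1) (hB1 : B 1 = x)
    (B' : Module.Basis (Fin 2) ℤ A') (hB'0 : B' 0 = 1) (hB'1 : B' 1 = x')
    (hx : x * x = a • (1 : A) + b • x) (hx' : x' * x' = a' • (1 : A') + b' • x') :
    Nonempty (A ≃+* A') ↔ (b ^ 2 + 4 * a = b' ^ 2 + 4 * a' ∧ b % 2 = b' % 2) := by
  subst hB1 hB'1
  let e := (QuadraticAlgebra.algEquivOfBasis B hB0 hx).toRingEquiv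
  let e' := (QuadraticAlgebra.algEquivOfBasis B' hB'0 hx').toRingEquiv
  rw [← QuadraticAlgebra.nonempty_ringEquiv_iff]
  exact ⟨fun ⟨f⟩ => ⟨(e.trans f).trans e'.symm⟩, fun ⟨g⟩ => ⟨(e.symm.trans g).trans e'⟩⟩
end

section
/- With notation as in the classification of rank-2 rings: if f: A → A' is a ring isomorphism between the rings determined by (a,b) and (a',b'), and f(x) = k·1' + l·x', then l = ±1, l²a' − klb' − k² = a, and 2k + lb' = b; consequently b'² + 4a' = b² + 4a and b ≡ b' (mod 2). -/
/-!
Squaring `f x = k + l x'` and reading off coordinates in the basis `{1, x'}` gives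
`a + b k = k² + l² a'` and `b l = 2 k l + l² b'`. Surjectivity of `f` puts `x'` in the image
`ℤ + ℤ (k + l x')`, whose `x'`-coordinates are multiples of `l`, so `l` is a unit, i.e.
`l² = 1`; the remaining identities are polynomial consequences of these three.
-/

namespace Module.Basis

variable {R M : Type*} [Semiring R] [AddCommMonoid M] [Module R M]

lemma fin_two_coord_eq (B : Basis (Fin 2) R M) {u v u' v' : R}
    (h : u • B 0 + v • B 1 = u' • B 0 + v' • B 1) : u = u' ∧ v = v' := by
  have h0 := congrArg (fun m ↦ B.repr m 0) h
  have h1 := congrArg (fun m ↦ B.repr m 1) h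
  exact ⟨by simpa using h0, by simpa using h1⟩

lemma eq_fin_two_repr (B : Basis (Fin 2) R M) (m : M) :
    m = B.repr m 0 • B 0 + B.repr m 1 • B 1 := by
  rw [← Fin.sum_univ_two (fun i ↦ B.repr m i • B i), B.sum_repr]

end Module.Basis

section RankTwo

variable {A A' : Type*} [CommRing A] [CommRing A']

lemma zsmul_one_add_zsmul_mul_self {y : A} {a b : ℤ} (hy : y * y = a • (1 : A) + b • y)
    (k l : ℤ) : (k • (1 : A) + l • y) * (k • (1 : A) + l • y) =
      (k * k + l * l * a) • (1 : A) + (2 * (k * l) + l * l * b) • y := by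
  simp only [zsmul_eq_mul] at hy ⊢
  push_cast
  linear_combination ((l : A) * l) * hy

lemma coord_relations_of_mul_self {x' y : A'} {a b a' b' k l : ℤ}
    (B' : Module.Basis (Fin 2) ℤ A') (hB'0 : B' 0 = 1) (hB'1 : B' 1 = x')
    (hx' : x' * x' = a' • (1 : A') + b' • x') (hy : y * y = a • (1 : A') + b • y)
    (hyx' : y = k • (1 : A') + l • x') :
    a + b * k = k * k + l * l * a' ∧ b * l = 2 * (k * l) + l * l * b' := by
  apply B'.fin_two_coord_eq
  rw [hB'0, hB'1, ← zsmul_one_add_zsmul_mul_self hx', ← hyx', hy, hyx']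
  module

lemma eq_one_or_neg_one_of_surjective {f : A →+* A'} (hf : Function.Surjective f)
    {x : A} {x' : A'} (B : Module.Basis (Fin 2) ℤ A) (hB0 : B 0 = 1) (hB1 : B 1 = x)
    (B' : Module.Basis (Fin 2) ℤ A') (hB'0 : B' 0 = 1) (hB'1 : B' 1 = x') {k l : ℤ}
    (hfx : f x = k • (1 : A') + l • x') : l = 1 ∨ l = -1 := by
  obtain ⟨y, rfl⟩ := hf x'
  set c := B.repr y 0
  set d := B.repr y 1
  have hy : y = c • (1 : A) + d • x := by rw [← hB0, ← hB1]; exact B.eq_fin_two_repr y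
  have hfy : f y = (c + d * k) • (1 : A') + (d * l) • f y := by
    conv_lhs => rw [hy, map_add, map_zsmul, map_zsmul, map_one, hfx]
    module
  have hdl : 1 = d * l := (B'.fin_two_coord_eq (u := 0) (v := 1) <| by
    rw [hB'0, hB'1, ← hfy, zero_smul, zero_add, one_smul]).2
  exact Int.eq_one_or_neg_one_of_mul_eq_one (mul_comm d l ▸ hdl.symm)

end RankTwo

lemma rank_two_invariants {a b a' b' k l : ℤ} (hl : l = 1 ∨ l = -1)
    (h1 : a + b * k = k * k + l * l * a') (h2 : b * l = 2 * (k * l) + l * l * b') :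
    l ^ 2 * a' - k * l * b' - k ^ 2 = a ∧ 2 * k + l * b' = b ∧
      b' ^ 2 + 4 * a' = b ^ 2 + 4 * a ∧ b % 2 = b' % 2 := by
  have hll : l * l = 1 := by rcases hl with rfl | rfl <;> norm_num
  have ha : l ^ 2 * a' - k * l * b' - k ^ 2 = a := by
    linear_combination -h1 + (k * l) * h2 + (2 * k ^ 2 + k * l * b' - b * k) * hll
  have hb : 2 * k + l * b' = b := by
    linear_combination -l * h2 + (b - 2 * k - l * b') * hll
  refine ⟨ha, hb, ?_, ?_⟩
  · linear_combination 4 * ha + (2 * k + l * b' + b) * hb - (b' ^ 2 + 4 * a') * hll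
  · rcases hl with rfl | rfl <;> omega

/-- If `f : A → A'` is a ring isomorphism between the rank-2 rings determined by `(a,b)`
and `(a',b')`, and `f x = k•1' + l•x'`, then `l = ±1`, `l²a' − klb' − k² = a`,
`2k + lb' = b`; consequently `b'² + 4a' = b² + 4a` and `b ≡ b' (mod 2)`. -/
theorem rank_two_ring_iso_relations (A A' : Type) [CommRing A] [CommRing A']
    (x : A) (x' : A') (a b a' b' : ℤ)
    (B : Module.Basis (Fin 2) ℤ A) (hB0 : B 0 = 1) (hB1 : B 1 = x)
    (B' : Module.Basis (Fin 2) ℤ A') (hB'0 : B' 0 = 1) (hB'1 : B' 1 = x')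
    (hx : x * x = a • (1 : A) + b • x) (hx' : x' * x' = a' • (1 : A') + b' • x')
    (f : A ≃+* A') (k l : ℤ) (hf : f x = k • (1 : A') + l • x') :
    (l = 1 ∨ l = -1) ∧ l ^ 2 * a' - k * l * b' - k ^ 2 = a ∧ 2 * k + l * b' = b ∧
      b' ^ 2 + 4 * a' = b ^ 2 + 4 * a ∧ b % 2 = b' % 2 := by
  have hsq : f x * f x = a • (1 : A') + b • f x := by
    rw [← map_mul, hx, map_add, map_zsmul, map_zsmul, map_one]
  obtain ⟨h1, h2⟩ := coord_relations_of_mul_self B' hB'0 hB'1 hx' hsq hf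
  have hl := eq_one_or_neg_one_of_surjective (f := (f : A →+* A')) f.surjective
    B hB0 hB1 B' hB'0 hB'1 hf
  exact ⟨hl, rank_two_invariants hl h1 h2⟩
end

section
/- With notation as in the classification of rank-2 rings: if b² + 4a = b'² + 4a' and b ≡ b' (mod 2), then the map f: A → A' defined by f(1) = 1' and f(x) = k·1' + x' with k = (b − b')/2 is a ring isomorphism. -/
/-!
Since `1, x` is a basis of `A`, an additive map out of `A` is a ring homomorphism as soon as it
sends `1` to `1` and `x` to a root of `X² - bX - a`. Completing the square, `k + x'` is such a root
in `A'` exactly because the discriminants agree and `2k = b - b'`; symmetrically `-k + x` is a root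
of `X² - b'X - a'` in `A`. The two resulting homomorphisms are mutually inverse, as their
composites fix the generators.
-/

section

variable {R A S : Type*} [CommRing R] [Ring A] [Ring S] [Algebra R A] [Algebra R S]

theorem smul_one_add_smul_mul_smul_one_add_smul {a b : R} {z : A}
    (hz : z * z = a • (1 : A) + b • z) (m n p q : R) :
    (m • (1 : A) + n • z) * (p • 1 + q • z)
      = (m * p + n * q * a) • (1 : A) + (m * q + n * p + n * q * b) • z := by
  simp only [add_mul, mul_add, smul_mul_smul, one_mul, mul_one, hz, smul_add, smul_smul]
  module

theorem Module.Basis.eq_smul_one_add_smul {x : A} (B : Module.Basis (Fin 2) R A)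
    (hB0 : B 0 = 1) (hB1 : B 1 = x) (u : A) :
    u = B.repr u 0 • (1 : A) + B.repr u 1 • x := by
  conv_lhs => rw [← B.sum_repr u]
  rw [Fin.sum_univ_two, hB0, hB1]

theorem Module.Basis.algHom_ext {x : A} (B : Module.Basis (Fin 2) R A)
    (hB0 : B 0 = 1) (hB1 : B 1 = x) {f g : A →ₐ[R] S} (h : f x = g x) : f = g := by
  ext u
  rw [B.eq_smul_one_add_smul hB0 hB1 u]
  simp only [map_add, map_smul, map_one, h]

theorem Module.Basis.exists_algHom_of_mul_self_eq {x : A} {a b : R}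
    (B : Module.Basis (Fin 2) R A) (hB0 : B 0 = 1) (hB1 : B 1 = x)
    (hx : x * x = a • (1 : A) + b • x) {y : S} (hy : y * y = a • (1 : S) + b • y) :
    ∃ f : A →ₐ[R] S, f x = y := by
  set f : A →ₗ[R] S := B.constr R ![1, y]
  have hf1 : f 1 = 1 := by rw [← hB0, B.constr_basis]; rfl
  have hfx : f x = y := by rw [← hB1, B.constr_basis]; rfl
  refine ⟨AlgHom.ofLinearMap f hf1 fun u v => ?_, hfx⟩
  rw [B.eq_smul_one_add_smul hB0 hB1 u, B.eq_smul_one_add_smul hB0 hB1 v,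
    smul_one_add_smul_mul_smul_one_add_smul hx]
  simp only [map_add, map_smul, hf1, hfx, smul_one_add_smul_mul_smul_one_add_smul hy]

end

theorem zsmul_one_add_mul_self_eq_of_discr_eq {S : Type*} [Ring S] {a b a' b' k : ℤ} {y : S}
    (hy : y * y = a' • (1 : S) + b' • y) (hdisc : b ^ 2 + 4 * a = b' ^ 2 + 4 * a')
    (hk : 2 * k = b - b') :
    (k • (1 : S) + y) * (k • 1 + y) = a • (1 : S) + b • (k • 1 + y) := by
  have hb : b = b' + 2 * k := by omega
  -- the discriminant identity, divided by 4 after substituting `b`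
  have ha' : a' = a + b * k - k ^ 2 := by
    have : 4 * (a + b * k) = 4 * (k ^ 2 + a') := by
      linear_combination hdisc + (b + b' - 2 * k) * hk
    omega
  subst hb ha'
  simp only [add_mul, mul_add, one_mul, mul_one, smul_mul_assoc, mul_smul_comm, hy]
  module

/-- Converse direction of the rank-2 ring classification: if `b² + 4a = b'² + 4a'` and
`b ≡ b' (mod 2)`, then with `k = (b − b')/2` the map determined by `1 ↦ 1'` and
`x ↦ k•1' + x'` is a ring isomorphism `A ≅ A'`. -/
theorem rank_two_ring_iso_of_invariants (A A' : Type) [CommRing A] [CommRing A']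
    (x : A) (x' : A') (a b a' b' : ℤ)
    (B : Module.Basis (Fin 2) ℤ A) (hB0 : B 0 = 1) (hB1 : B 1 = x)
    (B' : Module.Basis (Fin 2) ℤ A') (hB'0 : B' 0 = 1) (hB'1 : B' 1 = x')
    (hx : x * x = a • (1 : A) + b • x) (hx' : x' * x' = a' • (1 : A') + b' • x')
    (hdisc : b ^ 2 + 4 * a = b' ^ 2 + 4 * a') (k : ℤ) (hk : 2 * k = b - b') :
    ∃ f : A ≃+* A', f x = k • (1 : A') + x' := by
  obtain ⟨f, hf⟩ := B.exists_algHom_of_mul_self_eq hB0 hB1 hx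
    (zsmul_one_add_mul_self_eq_of_discr_eq hx' hdisc hk)
  obtain ⟨g, hg⟩ := B'.exists_algHom_of_mul_self_eq hB'0 hB'1 hx'
    (zsmul_one_add_mul_self_eq_of_discr_eq hx hdisc.symm (by omega : 2 * -k = b' - b))
  have hgf : g.comp f = AlgHom.id ℤ A := B.algHom_ext hB0 hB1 <| by
    simp only [AlgHom.comp_apply, hf, map_add, map_zsmul, map_one, hg, AlgHom.id_apply]
    module
  have hfg : f.comp g = AlgHom.id ℤ A' := B'.algHom_ext hB'0 hB'1 <| by
    simp only [AlgHom.comp_apply, hg, map_add, map_zsmul, map_one, hf, AlgHom.id_apply]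
    module
  exact ⟨(AlgEquiv.ofAlgHom f g hfg hgf).toRingEquiv, hf⟩
end
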